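/- arXiv:1212.5771 — 2 statements merged into one kernel-verified Lean document; each statement's English description precedes it below -/
import Mathlib

section
/- Let K be an A_n-crystal, let i and j be colors with |i−j| = 1, and let P = (v_0, e_1, v_1, …, e_p, v_p) be a maximal i-colored path of K. Then there is a unique index r ∈ {0,…,p} such that t_j(v_m) = t_j(v_{m−1}) − 1 and h_j(v_m) = h_j(v_{m−1}) for all 1 ≤ m ≤ r, while t_j(v_m) = t_j(v_{m−1}) and h_j(v_m) = h_j(v_{m−1}) + 1 for all r < m ≤ p. -/
open scoped Classical

namespace CrystalA

/-- A node `(i, k, j)` of the (extended) supporting graph stands for `v_i^k(j)`. -/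
abbrev Node : Type := ℕ × ℕ × ℕ

/-- Membership in the supporting graph `G`:
`1 ≤ j ≤ i ≤ n` and `i - j + 1 ≤ k ≤ n - j + 1`. -/
def IsNode (n : ℕ) (v : Node) : Prop :=
  1 ≤ v.2.2 ∧ v.2.2 ≤ v.1 ∧ v.1 ≤ n ∧ v.1 + 1 ≤ v.2.1 + v.2.2 ∧ v.2.1 + v.2.2 ≤ n + 1

/-- Membership in the extended graph `Ḡ`: `0 ≤ j ≤ n`, `j ≤ i ≤ n + 1`, `1 ≤ k ≤ n`. -/
def IsExtNode (n : ℕ) (v : Node) : Prop :=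
  v.2.2 ≤ n ∧ v.2.2 ≤ v.1 ∧ v.1 ≤ n + 1 ∧ 1 ≤ v.2.1 ∧ v.2.1 ≤ n

/-- Ascending step `v_i^k(j) → v_{i-1}^k(j)`. -/
def Asc (u w : Node) : Prop := u.2.1 = w.2.1 ∧ u.2.2 = w.2.2 ∧ u.1 = w.1 + 1

/-- Descending step `v_i^k(j) → v_{i+1}^k(j+1)`. -/
def Desc (u w : Node) : Prop := u.2.1 = w.2.1 ∧ w.2.2 = u.2.2 + 1 ∧ w.1 = u.1 + 1

/-- Edges of the supporting graph `G`. -/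
def GEdge (n : ℕ) (u w : Node) : Prop := IsNode n u ∧ IsNode n w ∧ (Asc u w ∨ Desc u w)

/-- Edges of the extended graph `Ḡ`. -/
def ExtEdge (n : ℕ) (u w : Node) : Prop := IsExtNode n u ∧ IsExtNode n w ∧ (Asc u w ∨ Desc u w)

/-- The extension of `f : V(G) → ℤ` to `Ḡ`: on an extra node it takes value `c_k`
if there is a directed path in `Ḡ^k` from it to a node of `G^k`, and `0` otherwise. -/
noncomputable def ext (n : ℕ) (c : ℕ → ℤ) (f : Node → ℤ) (v : Node) : ℤ :=
  if IsNode n v then f v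
  else if ∃ w, IsNode n w ∧ Relation.ReflTransGen (ExtEdge n) v w then c v.2.1 else 0

/-- Increment `∂f` of (the extension of) `f` on the edge `(u, w)`. -/
noncomputable def dP (n : ℕ) (c : ℕ → ℤ) (f : Node → ℤ) (u w : Node) : ℤ :=
  ext n c f u - ext n c f w

/-- Head of the SE-edge of `v = v_i^k(j)`, namely `v_{i+1}^k(j+1)`. -/
def seNode (v : Node) : Node := (v.1 + 1, v.2.1, v.2.2 + 1)

/-- Tail of the SW-edge of `v = v_i^k(j)`, namely `v_{i+1}^k(j)`. -/
def swNode (v : Node) : Node := (v.1 + 1, v.2.1, v.2.2)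

/-- Tail of the NW-edge of `v = v_i^k(j)`, namely `v_{i-1}^k(j-1)`. -/
def nwNode (v : Node) : Node := (v.1 - 1, v.2.1, v.2.2 - 1)

/-- The SE-edge of `v` is tight for `f`. -/
def SEtight (n : ℕ) (c : ℕ → ℤ) (f : Node → ℤ) (v : Node) : Prop :=
  dP n c f v (seNode v) = 0

/-- The SW-edge of `v` is tight for `f`. -/
def SWtight (n : ℕ) (c : ℕ → ℤ) (f : Node → ℤ) (v : Node) : Prop :=
  dP n c f (swNode v) v = 0

/-- The node `v_i^k(j)` has the switch property in the multinode `V_i(j)`: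
SE-edges of preceding nodes are tight and SW-edges of succeeding nodes are tight. -/
def SwitchAt (n : ℕ) (c : ℕ → ℤ) (f : Node → ℤ) (i j k : ℕ) : Prop :=
  (∀ k', i + 1 ≤ k' + j → k' < k → SEtight n c f (i, k', j)) ∧
  (∀ k', k < k' → k' + j ≤ n + 1 → SWtight n c f (i, k', j))

/-- Feasible functions of the crossing model (normalized to vanish off `G`). -/
def Feasible (n : ℕ) (c : ℕ → ℤ) (f : Node → ℤ) : Prop :=
  (∀ u w, GEdge n u w → 0 ≤ f u - f w) ∧
  (∀ v, IsNode n v → 0 ≤ f v ∧ f v ≤ c v.2.1) ∧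
  (∀ i j, 1 ≤ j → j ≤ i → i ≤ n → ∃ k, i + 1 ≤ k + j ∧ k + j ≤ n + 1 ∧ SwitchAt n c f i j k) ∧
  (∀ v, ¬ IsNode n v → f v = 0)

/-- `v_i^k(j)` is the switch-node of the multinode `V_i(j)`: the first node
with the switch property. -/
def IsSwitchNode (n : ℕ) (c : ℕ → ℤ) (f : Node → ℤ) (i j k : ℕ) : Prop :=
  i + 1 ≤ k + j ∧ k + j ≤ n + 1 ∧ SwitchAt n c f i j k ∧
  ∀ k', i + 1 ≤ k' + j → SwitchAt n c f i j k' → k ≤ k'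

/-- The slack `ε(v)` at a node `v = v_i^k(j)`. -/
noncomputable def slack (n : ℕ) (c : ℕ → ℤ) (f : Node → ℤ) (v : Node) : ℤ :=
  dP n c f (nwNode v) v - dP n c f (v.1, v.2.1, v.2.2 - 1) (v.1 + 1, v.2.1, v.2.2)

/-- The total slack `ε_i(j)` at the multinode `V_i(j)`. -/
noncomputable def epsSum (n : ℕ) (c : ℕ → ℤ) (f : Node → ℤ) (i j : ℕ) : ℤ :=
  ∑ k ∈ Finset.Icc (i + 1 - j) (n + 1 - j), slack n c f (i, k, j)

/-- `ε_i(p, j) = ε_i(p) + ⋯ + ε_i(j)`. -/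
noncomputable def epsInt (n : ℕ) (c : ℕ → ℤ) (f : Node → ℤ) (i p j : ℕ) : ℤ :=
  ∑ q ∈ Finset.Icc p j, epsSum n c f i q

/-- The reduced slack `ε̃_i(j)`. -/
noncomputable def redSlack (n : ℕ) (c : ℕ → ℤ) (f : Node → ℤ) (i j : ℕ) : ℤ :=
  if h : (Finset.Icc 1 j).Nonempty
  then max 0 ((Finset.Icc 1 j).inf' h fun p => epsInt n c f i p j)
  else 0

/-- `V_i(j)` is the active multinode for `f` and color `i`. -/
def Active (n : ℕ) (c : ℕ → ℤ) (f : Node → ℤ) (i j : ℕ) : Prop :=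
  1 ≤ j ∧ j ≤ i ∧ 0 < redSlack n c f i j ∧ ∀ q, j < q → q ≤ i → redSlack n c f i q = 0

/-- The edge relation of color `i` of the crystal graph `K(c)`:
`g = φ_i(f)` with `f, g` feasible. -/
def Move (n : ℕ) (c : ℕ → ℤ) (i : ℕ) (f g : Node → ℤ) : Prop :=
  Feasible n c f ∧ Feasible n c g ∧ 1 ≤ i ∧ i ≤ n ∧
  ∃ j k, Active n c f i j ∧ IsSwitchNode n c f i j k ∧
    g = Function.update f (i, k, j) (f (i, k, j) + 1)

/-- `SeqRel n c L f g`: applying the operators `F_i` for `i ∈ L` (head first)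
to `f` is defined and yields `g`. -/
def SeqRel (n : ℕ) (c : ℕ → ℤ) : List ℕ → (Node → ℤ) → (Node → ℤ) → Prop
  | [], f, g => f = g
  | i :: L, f, g => ∃ h, Move n c i f h ∧ SeqRel n c L h g

/-- The substring `w_{m,k,j} = F_j F_{j+1} ⋯ F_{j+k-1}` (rightmost applied first),
as a list of colors in order of application. -/
def wList (k j : ℕ) : List ℕ := (List.range k).map fun t => j + k - 1 - t

/-- The operator string `S_{m,k} = w_{m,k,m-k+1} ⋯ w_{m,k,2} w_{m,k,1}`
as a list of colors in order of application. -/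
def sList (m k : ℕ) : List ℕ := ((List.range (m - k + 1)).map fun t => wList k (t + 1)).flatten

/-- The `p`-th power `S_{m,k}^p` as a list of colors in order of application. -/
def sPow (m k p : ℕ) : List ℕ := (List.replicate p (sList m k)).flatten

/-- The composite `S_{m,kmax}^{p kmax} ∘ ⋯ ∘ S_{m,1}^{p 1}` as a list of colors
in order of application. -/
def sPowChain (m : ℕ) (p : ℕ → ℕ) (kmax : ℕ) : List ℕ :=
  ((List.range kmax).map fun t => sPow m (t + 1) (p (t + 1))).flatten

/-- Replacing each operator `F_j` by `F_{j+1}` in a string. -/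
def shiftList (L : List ℕ) : List ℕ := L.map (· + 1)

/-- The string `T_m` obtained from `S_{n-1,m-1}` by replacing each `F_j` by `F_{j+1}`. -/
def tList (n m : ℕ) : List ℕ := shiftList (sList (n - 1) (m - 1))

/-- The composite `T_n^{q n} ∘ ⋯ ∘ T_2^{q 2}` as a list of colors in order of application. -/
def tChain (n : ℕ) (q : ℕ → ℕ) : List ℕ :=
  ((List.range (n - 1)).map fun t => (List.replicate (q (t + 2)) (tList n (t + 2))).flatten).flatten

/-- The principal function `f[a]`, constant `a_k` on `G^k`. -/
noncomputable def principal (n : ℕ) (a : ℕ → ℤ) : Node → ℤ := fun v =>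
  if IsNode n v then a v.2.1 else 0

/-- One (undirected) step in the subgraph of `K(c)` with colors `lo, …, hi`. -/
def ColsStep (n : ℕ) (c : ℕ → ℤ) (lo hi : ℕ) (f g : Node → ℤ) : Prop :=
  ∃ i, lo ≤ i ∧ i ≤ hi ∧ (Move n c i f g ∨ Move n c i g f)

/-- `f` and `g` lie in the same connected component of the subgraph of `K(c)`
formed by all vertices and the edges of colors `lo, …, hi`. -/
def SameComp (n : ℕ) (c : ℕ → ℤ) (lo hi : ℕ) (f g : Node → ℤ) : Prop :=
  Relation.ReflTransGen (ColsStep n c lo hi) f g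

/-- Reachability by directed paths in `K(c)`. -/
def Reach (n : ℕ) (c : ℕ → ℤ) (f g : Node → ℤ) : Prop :=
  Relation.ReflTransGen (fun x y => ∃ i, Move n c i x y) f g

/-- The function `f_{a,Δ}` (with the renaming `x_m(j) = v_{m+j-1}^k(j)`, `m = i - j + 1`). -/
noncomputable def fDelta (n : ℕ) (a Δ : ℕ → ℤ) : Node → ℤ := fun v =>
  if IsNode n v then
    (let k := v.2.1
     let j := v.2.2
     let m := v.1 + 1 - v.2.2
     if m = k then (if j = n - k + 1 then a k else a k + max (Δ k) 0)
     else if j = n - k + 1 then a k + min (Δ (k - 1)) 0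
     else a k + max (Δ k) 0 + min (Δ (k - 1)) 0)
  else 0

/-! ### Crystal axioms -/

/-- `h_i(v)`: the number of edges of the maximal `i`-colored path starting at `v`. -/
noncomputable def headLen {V : Type*} (E : ℕ → V → V → Prop) (i : ℕ) (v : V) : ℕ :=
  sSup {m | ∃ g : ℕ → V, g 0 = v ∧ ∀ l, l < m → E i (g l) (g (l + 1))}

/-- `t_i(v)`: the number of edges of the maximal `i`-colored path ending at `v`. -/
noncomputable def tailLen {V : Type*} (E : ℕ → V → V → Prop) (i : ℕ) (v : V) : ℕ :=
  sSup {m | ∃ g : ℕ → V, g m = v ∧ ∀ l, l < m → E i (g l) (g (l + 1))}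

/-- The label `ℓ_j(e) = h_j(v) - h_j(u)` of an edge `e = (u, v)` w.r.t. color `j`. -/
noncomputable def lab {V : Type*} (E : ℕ → V → V → Prop) (j : ℕ) (u v : V) : ℤ :=
  (headLen E j v : ℤ) - (headLen E j u : ℤ)

/-- Neighboring colors: `|i - j| = 1`. -/
def Nbr (i j : ℕ) : Prop := i = j + 1 ∨ j = i + 1

/-- Distant colors: `|i - j| ≥ 2`. -/
def Dist (i j : ℕ) : Prop := i + 2 ≤ j ∨ j + 2 ≤ i

/-- The (regular) `A_n`-crystal axioms for an `n`-colored digraph with edge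
relations `E i` (`i` the color). -/
structure IsAnCrystal (n : ℕ) {V : Type*} (E : ℕ → V → V → Prop) : Prop where
  colorBound : ∀ i u v, E i u v → 1 ≤ i ∧ i ≤ n
  connected : ∀ u v : V, Relation.ReflTransGen (fun x y => ∃ i, E i x y ∨ E i y x) u v
  outFun : ∀ i u v v', E i u v → E i u v' → v = v'
  inFun : ∀ i u u' v, E i u v → E i u' v → u = u'
  a1 : ∀ i v, ∃ (t h : ℕ) (g : ℕ → V), g t = v ∧ (∀ m, m < t + h → E i (g m) (g (m + 1))) ∧
      (∀ m m', m ≤ t + h → m' ≤ t + h → g m = g m' → m = m') ∧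
      (¬ ∃ u, E i u (g 0)) ∧ (¬ ∃ w, E i (g (t + h)) w)
  a2_tail : ∀ i j u v, E i u v → 1 ≤ j → j ≤ n → j ≠ i → tailLen E j v ≤ tailLen E j u
  a2_head : ∀ i j u v, E i u v → 1 ≤ j → j ≤ n → j ≠ i → headLen E j u ≤ headLen E j v
  a2_diff : ∀ i j u v, E i u v → 1 ≤ j → j ≤ n → j ≠ i →
      ((headLen E j u : ℤ) - (tailLen E j u : ℤ)) - ((headLen E j v : ℤ) - (tailLen E j v : ℤ))
        = if Nbr i j then -1 else 0
  a2_convex : ∀ i j u v w, E i u v → E i v w → 1 ≤ j → j ≤ n → j ≠ i →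
      2 * headLen E j v ≤ headLen E j u + headLen E j w
  a3_fwd : ∀ i j u v v', Nbr i j → E i u v → E j u v' → lab E j u v = 0 →
      lab E i u v' = 1 ∧ ∃ w, E i v' w ∧ E j v w
  a3_bwd : ∀ i j u u' v, Nbr i j → E i u v → E j u' v → lab E j u v = 1 →
      lab E i u' v = 0 ∧ ∃ w, E i w u' ∧ E j w u
  a4_fwd : ∀ i j u v v', Nbr i j → E i u v → E j u v' → lab E j u v = 1 → lab E i u v' = 1 →
      ∃ w x2 x3 y2 y3, E j v x2 ∧ E j x2 x3 ∧ E i x3 w ∧ E i v' y2 ∧ E i y2 y3 ∧ E j y3 w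
  a4_bwd : ∀ i j u u' v, Nbr i j → E i u v → E j u' v → lab E j u v = 0 → lab E i u' v = 0 →
      ∃ w x2 x3 y2 y3, E j x2 u ∧ E j x3 x2 ∧ E i w x3 ∧ E i y2 u' ∧ E i y3 y2 ∧ E j w y3
  a5_ff : ∀ i j v x w y w', Dist i j → E j v x → E i x w → E i v y → E j y w' → w = w'
  a5_fb : ∀ i j v x w y w', Dist i j → E j x v → E i x w → E i v y → E j w' y → w = w'
  a5_bb : ∀ i j v x w y w', Dist i j → E j x v → E i w x → E i y v → E j w' y → w = w'


/-!
Along an `i`-edge `(u, v)`, axiom (A2) gives `t_j(v) ≤ t_j(u)`, `h_j(u) ≤ h_j(v)` and, since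
`|i - j| = 1`, `(h_j(v) - h_j(u)) + (t_j(u) - t_j(v)) = 1`: every `i`-edge either lowers `t_j`
by one or raises `h_j` by one, and not both. By the convexity part of (A2), once `h_j` rises
along an `i`-path it keeps rising. So the edges of the first kind form an initial segment of
the path, and `r` is its length.
-/

theorem existsUnique_threshold {A B : ℕ → Prop} {p : ℕ}
    (hAB : ∀ m, 1 ≤ m → m ≤ p → A m ∨ B m) (hAB' : ∀ m, 1 ≤ m → m ≤ p → ¬ (A m ∧ B m))
    (hB : ∀ m, 1 ≤ m → m < p → B m → B (m + 1)) :
    ∃! r, r ≤ p ∧ (∀ m, 1 ≤ m → m ≤ r → A m) ∧ (∀ m, r < m → m ≤ p → B m) := by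
  have no_overlap : ∀ r₁ r₂, r₂ ≤ p → (∀ m, 1 ≤ m → m ≤ r₂ → A m) →
      (∀ m, r₁ < m → m ≤ p → B m) → ¬ r₁ < r₂ := fun r₁ r₂ hr₂ hA₂ hB₁ hlt =>
    hAB' (r₁ + 1) (by omega) (by omega) ⟨hA₂ _ (by omega) hlt, hB₁ _ (by omega) (by omega)⟩
  refine existsUnique_of_exists_of_unique ?_ fun r₁ r₂ ⟨hr₁, hA₁, hB₁⟩ ⟨hr₂, hA₂, hB₂⟩ =>
    le_antisymm (not_lt.1 (no_overlap r₂ r₁ hr₁ hA₁ hB₂))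
      (not_lt.1 (no_overlap r₁ r₂ hr₂ hA₂ hB₁))
  -- the threshold is the last index before the first `B`-step, or `p` if there is none
  have hex : ∃ r, r = p ∨ B (r + 1) := ⟨p, .inl rfl⟩
  have hrp : Nat.find hex ≤ p := Nat.find_min' hex (.inl rfl)
  refine ⟨Nat.find hex, hrp, fun m hm1 hmr => ?_, fun m hrm hmp => ?_⟩
  · have hnot := Nat.find_min hex (show m - 1 < Nat.find hex by omega)
    rw [Nat.sub_add_cancel hm1] at hnot
    exact (hAB m hm1 (hmr.trans hrp)).resolve_right fun h => hnot (.inr h)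
  · induction m, hrm using Nat.le_induction with
    | base => exact (Nat.find_spec hex).resolve_left (by omega)
    | succ m hrm ih => exact hB m (by omega) (by omega) (ih (by omega))

theorem Nbr.ne {i j : ℕ} (h : Nbr i j) : j ≠ i := by
  rcases h with rfl | rfl <;> omega

section EdgeTypes

variable {V : Type*} (E : ℕ → V → V → Prop) (j : ℕ)

def LowersTail (u v : V) : Prop :=
  tailLen E j u = tailLen E j v + 1 ∧ headLen E j v = headLen E j u

def RaisesHead (u v : V) : Prop :=
  tailLen E j v = tailLen E j u ∧ headLen E j v = headLen E j u + 1

variable {E j}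

theorem not_lowersTail_and_raisesHead {u v : V} :
    ¬ (LowersTail E j u v ∧ RaisesHead E j u v) := by
  rintro ⟨⟨hlow, -⟩, ⟨hraise, -⟩⟩
  omega

end EdgeTypes

namespace IsAnCrystal

variable {n : ℕ} {V : Type*} {E : ℕ → V → V → Prop} {i j : ℕ}

theorem lowersTail_or_raisesHead (hK : IsAnCrystal n E) (hij : Nbr i j)
    (hj1 : 1 ≤ j) (hj2 : j ≤ n) {u v : V} (huv : E i u v) :
    LowersTail E j u v ∨ RaisesHead E j u v := by
  have ht := hK.a2_tail i j u v huv hj1 hj2 hij.ne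
  have hh := hK.a2_head i j u v huv hj1 hj2 hij.ne
  have hd := hK.a2_diff i j u v huv hj1 hj2 hij.ne
  rw [if_pos hij] at hd
  unfold LowersTail RaisesHead
  omega

theorem raisesHead_of_raisesHead (hK : IsAnCrystal n E) (hij : Nbr i j)
    (hj1 : 1 ≤ j) (hj2 : j ≤ n) {u v w : V} (huv : E i u v) (hvw : E i v w)
    (hrise : RaisesHead E j u v) : RaisesHead E j v w := by
  have hconv := hK.a2_convex i j u v w huv hvw hj1 hj2 hij.ne
  rcases hK.lowersTail_or_raisesHead hij hj1 hj2 hvw with ⟨-, hflat⟩ | hnext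
  · exact absurd hconv (by rw [hflat, hrise.2]; omega)
  · exact hnext

end IsAnCrystal

theorem statement16_general {V : Type} (n : ℕ) (E : ℕ → V → V → Prop)
    (hK : IsAnCrystal n E) (i j : ℕ) (hij : Nbr i j)
    (hj1 : 1 ≤ j) (hj2 : j ≤ n)
    (p : ℕ) (g : ℕ → V)
    (hpath : ∀ m, m < p → E i (g m) (g (m + 1))) :
    ∃! r, r ≤ p ∧
      (∀ m, 1 ≤ m → m ≤ r →
        tailLen E j (g (m - 1)) = tailLen E j (g m) + 1 ∧
        headLen E j (g m) = headLen E j (g (m - 1))) ∧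
      (∀ m, r < m → m ≤ p →
        tailLen E j (g m) = tailLen E j (g (m - 1)) ∧
        headLen E j (g m) = headLen E j (g (m - 1)) + 1) := by
  have hedge : ∀ m, 1 ≤ m → m ≤ p → E i (g (m - 1)) (g m) := fun m hm1 hmp => by
    simpa [Nat.sub_add_cancel hm1] using hpath (m - 1) (by omega)
  apply existsUnique_threshold (A := fun m => LowersTail E j (g (m - 1)) (g m))
    (B := fun m => RaisesHead E j (g (m - 1)) (g m))
  · exact fun m hm1 hmp => hK.lowersTail_or_raisesHead hij hj1 hj2 (hedge m hm1 hmp)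
  · exact fun m _ _ => not_lowersTail_and_raisesHead
  · intro m hm1 hmp hrise
    simpa using hK.raisesHead_of_raisesHead hij hj1 hj2 (hedge m hm1 hmp.le)
      (by simpa using hedge (m + 1) (by omega) hmp) hrise

/-- existence and uniqueness of the critical vertex. On a maximal
`i`-colored path `v_0, …, v_p` of an `A_n`-crystal and a neighboring color `j`, there
is a unique `r` such that traversing the edges before position `r` decreases `t_j` by
one keeping `h_j`, and traversing the edges after position `r` keeps `t_j` and
increases `h_j` by one. -/
theorem statement16 {V : Type} (n : ℕ) (E : ℕ → V → V → Prop)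
    (hK : IsAnCrystal n E) (i j : ℕ) (hij : Nbr i j)
    (hi1 : 1 ≤ i) (hi2 : i ≤ n) (hj1 : 1 ≤ j) (hj2 : j ≤ n)
    (p : ℕ) (g : ℕ → V)
    (hpath : ∀ m, m < p → E i (g m) (g (m + 1)))
    (hmax0 : ¬ ∃ u, E i u (g 0)) (hmaxp : ¬ ∃ w, E i (g p) w) :
    ∃! r, r ≤ p ∧
      (∀ m, 1 ≤ m → m ≤ r →
        tailLen E j (g (m - 1)) = tailLen E j (g m) + 1 ∧
        headLen E j (g m) = headLen E j (g (m - 1))) ∧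
      (∀ m, r < m → m ≤ p →
        tailLen E j (g m) = tailLen E j (g (m - 1)) ∧
        headLen E j (g m) = headLen E j (g (m - 1)) + 1) :=
  statement16_general n E hK i j hij hj1 hj2 p g hpath
end CrystalA
end

section
/- Let K be an A_n-crystal, let i and j be colors with |i−j| = 1, and let v be a vertex of K. If v is the critical vertex with respect to j of the maximal i-colored path through v, then v is the critical vertex with respect to i of the maximal j-colored path through v. -/
open scoped Classical

namespace CrystalA

/-- `v` is the critical vertex, w.r.t. color `j`, of the maximal `i`-colored path
through `v`: along this path `t_j` decreases by one (with `h_j` constant) before `v`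
and `h_j` increases by one (with `t_j` constant) after `v`. -/
def IsCritical {V : Type*} (E : ℕ → V → V → Prop) (i j : ℕ) (v : V) : Prop :=
  ∃ (t h : ℕ) (g : ℕ → V), g t = v ∧ (∀ m, m < t + h → E i (g m) (g (m + 1))) ∧
    (¬ ∃ u, E i u (g 0)) ∧ (¬ ∃ w, E i (g (t + h)) w) ∧
    (∀ m, 1 ≤ m → m ≤ t →
      tailLen E j (g (m - 1)) = tailLen E j (g m) + 1 ∧
      headLen E j (g m) = headLen E j (g (m - 1))) ∧
    (∀ m, t < m → m ≤ t + h →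
      tailLen E j (g m) = tailLen E j (g (m - 1)) ∧
      headLen E j (g m) = headLen E j (g (m - 1)) + 1)


section StatementSeventeenAux

variable {V : Type} {E : ℕ → V → V → Prop} {n : ℕ}

private lemma headLen_eq_of_path
    (hout : ∀ i u v v', E i u v → E i u v' → v = v')
    {i : ℕ} {v : V} {t h : ℕ} {g : ℕ → V} (hgt : g t = v)
    (hedge : ∀ m, m < t + h → E i (g m) (g (m + 1)))
    (hend : ¬ ∃ w, E i (g (t + h)) w) :
    headLen E i v = h := by
  have hub : ∀ m ∈ {m | ∃ g' : ℕ → V, g' 0 = v ∧ ∀ l, l < m → E i (g' l) (g' (l + 1))},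
      m ≤ h := by
    rintro m ⟨g', hg0, hg'⟩
    by_contra hm
    push_neg at hm
    have key : ∀ l, l ≤ h → g' l = g (t + l) := by
      intro l
      induction l with
      | zero => intro _; simpa [hgt] using hg0
      | succ l ih =>
        intro hl
        have h1 := ih (by omega)
        have e1 : E i (g' l) (g' (l + 1)) := hg' l (by omega)
        have e2 : E i (g (t + l)) (g (t + l + 1)) := hedge (t + l) (by omega)
        rw [h1] at e1
        have := hout i (g (t + l)) _ _ e1 e2
        exact this
    have e1 : E i (g' h) (g' (h + 1)) := hg' h (by omega)
    rw [key h le_rfl] at e1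
    exact hend ⟨g' (h + 1), e1⟩
  have hmem : h ∈ {m | ∃ g' : ℕ → V, g' 0 = v ∧ ∀ l, l < m → E i (g' l) (g' (l + 1))} := by
    refine ⟨fun l => g (t + l), by simpa using hgt, fun l hl => ?_⟩
    exact hedge (t + l) (by omega)
  exact le_antisymm (csSup_le ⟨h, hmem⟩ hub) (le_csSup ⟨h, hub⟩ hmem)

private lemma tailLen_eq_of_path
    (hin : ∀ i u u' v, E i u v → E i u' v → u = u')
    {i : ℕ} {v : V} {t h : ℕ} {g : ℕ → V} (hgt : g t = v)
    (hedge : ∀ m, m < t + h → E i (g m) (g (m + 1)))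
    (hstart : ¬ ∃ u, E i u (g 0)) :
    tailLen E i v = t := by
  have hub : ∀ m ∈ {m | ∃ g' : ℕ → V, g' m = v ∧ ∀ l, l < m → E i (g' l) (g' (l + 1))},
      m ≤ t := by
    rintro m ⟨g', hgm, hg'⟩
    by_contra hm
    push_neg at hm
    have key : ∀ l, l ≤ t → g' (m - l) = g (t - l) := by
      intro l
      induction l with
      | zero => intro _; simp only [Nat.sub_zero]; rw [hgm, hgt]
      | succ l ih =>
        intro hl
        have h1 := ih (by omega)
        have e1 : E i (g' (m - l - 1)) (g' (m - l)) := by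
          have := hg' (m - l - 1) (by omega)
          rwa [show m - l - 1 + 1 = m - l from by omega] at this
        have e2 : E i (g (t - l - 1)) (g (t - l)) := by
          have := hedge (t - l - 1) (by omega)
          rwa [show t - l - 1 + 1 = t - l from by omega] at this
        rw [h1] at e1
        have := hin i (g' (m - l - 1)) (g (t - l - 1)) _ e1 e2
        rw [show m - (l + 1) = m - l - 1 from by omega,
          show t - (l + 1) = t - l - 1 from by omega]
        exact this
    have e1 : E i (g' (m - t - 1)) (g' (m - t)) := by
      have := hg' (m - t - 1) (by omega)
      rwa [show m - t - 1 + 1 = m - t from by omega] at this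
    have h2 : g' (m - t) = g 0 := by
      have := key t le_rfl
      rwa [Nat.sub_self] at this
    rw [h2] at e1
    exact hstart ⟨g' (m - t - 1), e1⟩
  have hmem : t ∈ {m | ∃ g' : ℕ → V, g' m = v ∧ ∀ l, l < m → E i (g' l) (g' (l + 1))} :=
    ⟨g, hgt, fun l hl => hedge l (by omega)⟩
  exact le_antisymm (csSup_le ⟨t, hmem⟩ hub) (le_csSup ⟨t, hub⟩ hmem)

private lemma head_tail_step (hK : IsAnCrystal n E) {i : ℕ} {u w : V} (he : E i u w) :
    headLen E i u = headLen E i w + 1 ∧ tailLen E i u + 1 = tailLen E i w := by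
  obtain ⟨t, h, g, hgt, hedge, _, hstart, hend⟩ := hK.a1 i u
  have hu_head : headLen E i u = h := headLen_eq_of_path hK.outFun hgt hedge hend
  have hu_tail : tailLen E i u = t := tailLen_eq_of_path hK.inFun hgt hedge hstart
  have hh : 1 ≤ h := by
    rcases Nat.eq_zero_or_pos h with h0 | h1
    · exfalso; apply hend; refine ⟨w, ?_⟩; subst h0; simpa [hgt] using he
    · exact h1
  have e := hedge t (by omega)
  rw [hgt] at e
  have hw : w = g (t + 1) := hK.outFun i u w _ he e
  have hw_head : headLen E i w = h - 1 := by
    refine headLen_eq_of_path hK.outFun (g := g) (t := t + 1) (h := h - 1) hw.symm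
      (fun m hm => hedge m (by omega)) ?_
    rw [show t + 1 + (h - 1) = t + h from by omega]
    exact hend
  have hw_tail : tailLen E i w = t + 1 := by
    refine tailLen_eq_of_path hK.inFun (g := g) (t := t + 1) (h := h - 1) hw.symm
      (fun m hm => hedge m (by omega)) hstart
  omega

private lemma exists_out_edge (hK : IsAnCrystal n E) {i : ℕ} {v : V}
    (h1 : 1 ≤ headLen E i v) : ∃ w, E i v w := by
  obtain ⟨t, h, g, hgt, hedge, _, hstart, hend⟩ := hK.a1 i v
  have hh : headLen E i v = h := headLen_eq_of_path hK.outFun hgt hedge hend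
  have e := hedge t (by omega)
  rw [hgt] at e
  exact ⟨g (t + 1), e⟩

private lemma exists_in_edge (hK : IsAnCrystal n E) {i : ℕ} {v : V}
    (h1 : 1 ≤ tailLen E i v) : ∃ u, E i u v := by
  obtain ⟨t, h, g, hgt, hedge, _, hstart, hend⟩ := hK.a1 i v
  have ht : tailLen E i v = t := tailLen_eq_of_path hK.inFun hgt hedge hstart
  have e := hedge (t - 1) (by omega)
  rw [show t - 1 + 1 = t from by omega, hgt] at e
  exact ⟨g (t - 1), e⟩

private lemma increment (hK : IsAnCrystal n E) {a b : ℕ} {u w : V}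
    (hab : Nbr a b) (hb1 : 1 ≤ b) (hb2 : b ≤ n) (he : E a u w) :
    (headLen E b w = headLen E b u ∧ tailLen E b u = tailLen E b w + 1) ∨
    (headLen E b w = headLen E b u + 1 ∧ tailLen E b w = tailLen E b u) := by
  have hba : b ≠ a := by rcases hab with h | h <;> omega
  have h1 := hK.a2_tail a b u w he hb1 hb2 hba
  have h2 := hK.a2_head a b u w he hb1 hb2 hba
  have h3 := hK.a2_diff a b u w he hb1 hb2 hba
  rw [if_pos hab] at h3
  omega

private lemma crit_out (hK : IsAnCrystal n E) {i j : ℕ} (hij : Nbr i j)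
    (hi1 : 1 ≤ i) (hi2 : i ≤ n) {v v' : V}
    (hv : IsCritical E i j v) (he : E j v v') :
    headLen E i v' = headLen E i v + 1 ∧ tailLen E i v' = tailLen E i v := by
  have hji : Nbr j i := Or.symm hij
  obtain ⟨t, h, g, hgt, hedge, hstart, hend, hpre, hpost⟩ := hv
  have hinc := increment hK hji hi1 hi2 he
  rcases Nat.eq_zero_or_pos t with ht0 | ht1
  · have htv : tailLen E i v = 0 := by
      have := tailLen_eq_of_path hK.inFun hgt hedge hstart; omega
    rcases hinc with ⟨h1, h2⟩ | ⟨h1, h2⟩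
    · omega
    · exact ⟨h1, h2⟩
  · have heu : E i (g (t - 1)) v := by
      have := hedge (t - 1) (by omega)
      rwa [show t - 1 + 1 = t from by omega, hgt] at this
    obtain ⟨htl, hhd⟩ := hpre t ht1 le_rfl
    rw [hgt] at htl hhd
    have hjv : 1 ≤ headLen E j v := by
      have := (head_tail_step hK he).1; omega
    obtain ⟨x, hx⟩ := exists_out_edge hK (show 1 ≤ headLen E j (g (t - 1)) by omega)
    have hlab : lab E j (g (t - 1)) v = 0 := by
      unfold lab; rw [hhd]; ring
    obtain ⟨hlabi, w, hxw, hvw⟩ := hK.a3_fwd i j (g (t - 1)) v x hij heu hx hlab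
    have hwv' : w = v' := hK.outFun j v w v' hvw he
    rw [hwv'] at hxw
    have s1 := (head_tail_step hK heu).1
    have s2 := (head_tail_step hK hxw).1
    unfold lab at hlabi
    have hd : headLen E i v' = headLen E i v + 1 := by omega
    rcases hinc with ⟨h1, h2⟩ | ⟨h1, h2⟩ <;> exact ⟨hd, by omega⟩

private lemma crit_in (hK : IsAnCrystal n E) {i j : ℕ} (hij : Nbr i j)
    (hi1 : 1 ≤ i) (hi2 : i ≤ n) {u' v : V}
    (hv : IsCritical E i j v) (he : E j u' v) :
    headLen E i u' = headLen E i v ∧ tailLen E i u' = tailLen E i v + 1 := by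
  have hji : Nbr j i := Or.symm hij
  obtain ⟨t, h, g, hgt, hedge, hstart, hend, hpre, hpost⟩ := hv
  have hinc := increment hK hji hi1 hi2 he
  rcases Nat.eq_zero_or_pos h with hh0 | hh1
  · have hhv : headLen E i v = 0 := by
      have := headLen_eq_of_path hK.outFun hgt hedge hend; omega
    rcases hinc with ⟨h1, h2⟩ | ⟨h1, h2⟩
    · exact ⟨h1.symm, h2⟩
    · omega
  · have hew : E i v (g (t + 1)) := by
      have := hedge t (by omega)
      rwa [hgt] at this
    have hp := hpost (t + 1) (by omega) (by omega)
    simp only [Nat.add_sub_cancel] at hp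
    rw [hgt] at hp
    obtain ⟨hp1, hp2⟩ := hp
    have hjv : 1 ≤ tailLen E j v := by
      have := (head_tail_step hK he).2; omega
    obtain ⟨y, hy⟩ := exists_in_edge hK (show 1 ≤ tailLen E j (g (t + 1)) by omega)
    have hlab : lab E j v (g (t + 1)) = 1 := by
      unfold lab; rw [hp2]; push_cast; ring
    obtain ⟨hlabi, w, hwy, hwv⟩ := hK.a3_bwd i j v y (g (t + 1)) hij hew hy hlab
    have hwu' : w = u' := hK.inFun j w u' v hwv he
    rw [hwu'] at hwy
    have s1 := (head_tail_step hK hwy).1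
    have s2 := (head_tail_step hK hew).1
    unfold lab at hlabi
    have hd : headLen E i u' = headLen E i v := by omega
    rcases hinc with ⟨h1, h2⟩ | ⟨h1, h2⟩ <;> exact ⟨hd, by omega⟩

private lemma prop_down (H : ℕ → ℕ) (N s : ℕ)
    (hstep : ∀ m, 1 ≤ m → m ≤ N → H m = H (m - 1) ∨ H m = H (m - 1) + 1)
    (hconv : ∀ m, 1 ≤ m → m + 1 ≤ N → 2 * H m ≤ H (m - 1) + H (m + 1))
    (hsN : s ≤ N) (hseed : H s = H (s - 1)) :
    ∀ m, 1 ≤ m → m ≤ s → H m = H (m - 1) := by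
  have key : ∀ d m, 1 ≤ m → m ≤ s → s - m = d → H m = H (m - 1) := by
    intro d
    induction d with
    | zero =>
      intro m h1 h2 h3
      have : m = s := by omega
      subst this; exact hseed
    | succ d ih =>
      intro m h1 h2 h3
      have h4 := ih (m + 1) (by omega) (by omega) (by omega)
      rw [Nat.add_sub_cancel] at h4
      have h5 := hconv m h1 (by omega)
      have h6 := hstep m h1 (by omega)
      omega
  intro m hm1 hms
  exact key (s - m) m hm1 hms rfl

private lemma prop_up (H : ℕ → ℕ) (N s : ℕ)
    (hstep : ∀ m, 1 ≤ m → m ≤ N → H m = H (m - 1) ∨ H m = H (m - 1) + 1)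
    (hconv : ∀ m, 1 ≤ m → m + 1 ≤ N → 2 * H m ≤ H (m - 1) + H (m + 1))
    (hsN : s + 1 ≤ N) (hseed : H (s + 1) = H s + 1) :
    ∀ m, s + 1 ≤ m → m ≤ N → H m = H (m - 1) + 1 := by
  have key : ∀ d m, m = s + 1 + d → m ≤ N → H m = H (m - 1) + 1 := by
    intro d
    induction d with
    | zero =>
      intro m h1 h2
      subst h1
      simpa using hseed
    | succ d ih =>
      intro m h1 h2
      have h4 := ih (m - 1) (by omega) (by omega)
      have h5 := hconv (m - 1) (by omega) (by omega)
      rw [show m - 1 + 1 = m from by omega] at h5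
      have h6 := hstep m (by omega) h2
      omega
  intro m hm1 hm2
  exact key (m - (s + 1)) m (by omega) hm2

end StatementSeventeenAux

/-- common critical vertices. For neighboring colors `i, j`, if
`v` is the critical vertex w.r.t. `j` of the maximal `i`-path through `v`, then `v`
is the critical vertex w.r.t. `i` of the maximal `j`-path through `v`. -/
theorem statement17 {V : Type} (n : ℕ) (E : ℕ → V → V → Prop)
    (hK : IsAnCrystal n E) (i j : ℕ) (hij : Nbr i j)
    (hi1 : 1 ≤ i) (hi2 : i ≤ n) (hj1 : 1 ≤ j) (hj2 : j ≤ n)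
    (v : V) (hv : IsCritical E i j v) :
    IsCritical E j i v := by
  have hji : Nbr j i := Or.symm hij
  have hineqj : i ≠ j := by rcases hij with h | h <;> omega
  obtain ⟨t, h, g, hgt, hedge, _, hstart, hend⟩ := hK.a1 j v
  have hedge' : ∀ m, 1 ≤ m → m ≤ t + h → E j (g (m - 1)) (g m) := by
    intro m h1 h2
    have := hedge (m - 1) (by omega)
    rwa [show m - 1 + 1 = m from by omega] at this
  have hstep : ∀ m, 1 ≤ m → m ≤ t + h →
      headLen E i (g m) = headLen E i (g (m - 1)) ∨
      headLen E i (g m) = headLen E i (g (m - 1)) + 1 := by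
    intro m h1 h2
    rcases increment hK hji hi1 hi2 (hedge' m h1 h2) with ⟨a, _⟩ | ⟨a, _⟩
    · exact Or.inl a
    · exact Or.inr a
  have hconv : ∀ m, 1 ≤ m → m + 1 ≤ t + h →
      2 * headLen E i (g m) ≤ headLen E i (g (m - 1)) + headLen E i (g (m + 1)) := by
    intro m h1 h2
    exact hK.a2_convex j i (g (m - 1)) (g m) (g (m + 1)) (hedge' m h1 (by omega))
      (hedge m (by omega)) hi1 hi2 hineqj
  refine ⟨t, h, g, hgt, hedge, hstart, hend, ?_, ?_⟩
  · intro m h1 h2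
    have hein : E j (g (t - 1)) v := by
      have := hedge' t (by omega) (by omega)
      rwa [hgt] at this
    have hc := crit_in hK hij hi1 hi2 hv hein
    have hseed : headLen E i (g t) = headLen E i (g (t - 1)) := by
      rw [hgt]; exact hc.1.symm
    have hdown := prop_down (fun m => headLen E i (g m)) (t + h) t hstep hconv
      (by omega) hseed
    have hhead := hdown m h1 h2
    have hinc := increment hK hji hi1 hi2 (hedge' m h1 (by omega))
    rcases hinc with ⟨a, b⟩ | ⟨a, b⟩ <;> exact ⟨by omega, hhead⟩
  · intro m h1 h2
    have heo : E j v (g (t + 1)) := by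
      have := hedge t (by omega)
      rwa [hgt] at this
    have hc := crit_out hK hij hi1 hi2 hv heo
    have hseed : headLen E i (g (t + 1)) = headLen E i (g t) + 1 := by
      rw [hgt]; exact hc.1
    have hup := prop_up (fun m => headLen E i (g m)) (t + h) t hstep hconv
      (by omega) hseed
    have hhead := hup m (by omega) h2
    have hinc := increment hK hji hi1 hi2 (hedge' m (by omega) h2)
    rcases hinc with ⟨a, b⟩ | ⟨a, b⟩ <;> exact ⟨by omega, hhead⟩
end CrystalA
end
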